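/- Let f_a : ℝ^{n×m} → ℝ be twice continuously differentiable, μ > 0, and ρ(U,V) := f_a(UVᵀ) + (μ/4)‖UᵀU − VᵀV‖_F² for U ∈ ℝ^{n×r}, V ∈ ℝ^{m×r}. Given a constant ε > 0, if ‖UᵀU − VᵀV‖_F ≥ ε, then the gradient of ρ at (U,V) satisfies ‖∇ρ(U,V)‖_F ≥ μ·(ε/r)^{3/2}. -/

import Mathlib

/-!
Test the gradient against a direction that leaves `UVᵀ` fixed to first order. Let `v` be a unit
eigenvector of the symmetric matrix `E = UᵀU - VᵀV` whose eigenvalue `λ` has the largest modulus,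
`D = vvᵀ`, and `Δ = (UD; -VD)`. Along `W + tΔ` the product `UVᵀ` moves only at order `t²`, while
`E` moves by `t (DS + SD)` with `S = UᵀU + VᵀV`; hence the derivative of `ρ` along `Δ` is
`μ ⟨E, DS + SD⟩ / 2 = μ λ ‖Δ‖²`. As `λ = ‖Uv‖² - ‖Vv‖²` and `‖Δ‖² = ‖Uv‖² + ‖Vv‖²`,
Cauchy–Schwarz gives `‖∇ρ‖ ≥ μ |λ| ‖Δ‖ ≥ μ |λ|^{3/2}`, and `ε² ≤ ‖E‖² ≤ r λ²` gives `|λ| ≥ ε / r`.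
-/

open Matrix

attribute [local instance] Matrix.frobeniusSeminormedAddCommGroup
  Matrix.frobeniusNormedAddCommGroup Matrix.frobeniusNormedSpace

/-- Hessian quadratic/bilinear form of `f` at `x`, evaluated at directions `v, w`. -/
noncomputable def hess {E : Type*} [NormedAddCommGroup E] [NormedSpace ℝ E]
    (f : E → ℝ) (x v w : E) : ℝ :=
  iteratedFDeriv ℝ 2 f x ![v, w]

/-- Second-order critical point: vanishing gradient and positive semidefinite Hessian. -/
def IsSOCP {E : Type*} [NormedAddCommGroup E] [NormedSpace ℝ E]
    (f : E → ℝ) (x : E) : Prop :=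
  fderiv ℝ f x = 0 ∧ ∀ v : E, 0 ≤ hess f x v v

/-- The `δ`-RIP₂ᵣ,₂ₜ property (Frobenius norm). -/
def RIP {I J : Type*} [Fintype I] [Fintype J]
    (r t : ℕ) (δ : ℝ) (f : Matrix I J ℝ → ℝ) : Prop :=
  ∀ M K : Matrix I J ℝ, M.rank ≤ 2 * r → K.rank ≤ 2 * t →
    (1 - δ) * ‖K‖ ^ 2 ≤ hess f M K K ∧ hess f M K K ≤ (1 + δ) * ‖K‖ ^ 2

/-- The `κ`-BDP₂ₜ property. -/
def BDP {I J : Type*} [Fintype I] [Fintype J]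
    (t : ℕ) (κ : ℝ) (f : Matrix I J ℝ → ℝ) : Prop :=
  ∀ M M' K L : Matrix I J ℝ, M.rank ≤ 2 * t → M'.rank ≤ 2 * t →
    K.rank ≤ 2 * t → L.rank ≤ 2 * t →
    |hess f M K L - hess f M' K L| ≤ κ * ‖K‖ * ‖L‖

/-- Gradient of `f` at `M`, as a matrix (w.r.t. the Frobenius inner product). -/
noncomputable def mgrad {I J : Type*} [Fintype I] [Fintype J] [DecidableEq I] [DecidableEq J]
    (f : Matrix I J ℝ → ℝ) (M : Matrix I J ℝ) : Matrix I J ℝ :=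
  Matrix.of fun i j => fderiv ℝ f M (Matrix.single i j 1)

/-- Trace inner product `⟨X, Y⟩ = tr(Xᵀ Y)` of matrices. -/
noncomputable def minner {I J : Type*} [Fintype I] [Fintype J]
    (X Y : Matrix I J ℝ) : ℝ :=
  Matrix.trace (Xᵀ * Y)

/-- Objective of the factorized asymmetric problem (3). -/
noncomputable def ha {n m r : ℕ} (f : Matrix (Fin n) (Fin m) ℝ → ℝ)
    (p : Matrix (Fin n) (Fin r) ℝ × Matrix (Fin m) (Fin r) ℝ) : ℝ :=
  f (p.1 * p.2ᵀ)

/-- Objective of the regularized asymmetric problem (5). -/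
noncomputable def rhoA {n m r : ℕ} (f : Matrix (Fin n) (Fin m) ℝ → ℝ) (μ : ℝ)
    (p : Matrix (Fin n) (Fin r) ℝ × Matrix (Fin m) (Fin r) ℝ) : ℝ :=
  f (p.1 * p.2ᵀ) + μ / 4 * ‖p.1ᵀ * p.1 - p.2ᵀ * p.2‖ ^ 2

/-- Objective of the symmetric factorized problem (4). -/
noncomputable def hs {n r : ℕ} (f : Matrix (Fin n) (Fin n) ℝ → ℝ)
    (U : Matrix (Fin n) (Fin r) ℝ) : ℝ :=
  f (U * Uᵀ)


/-- Objective of the regularized asymmetric problem (5), written on the stacked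
variable `W = (U; V)`. -/
noncomputable def rhoW {n m r : ℕ} (f : Matrix (Fin n) (Fin m) ℝ → ℝ) (μ : ℝ)
    (W : Matrix (Fin n ⊕ Fin m) (Fin r) ℝ) : ℝ :=
  f (W.toRows₁ * W.toRows₂ᵀ) + μ / 4 * ‖W.toRows₁ᵀ * W.toRows₁ - W.toRows₂ᵀ * W.toRows₂‖ ^ 2

/-- The `(α, β, γ)`-strict saddle property for a function on a matrix space,
with the Frobenius distance to the set of global minimizers. -/
def StrictSaddleMat {I J : Type*} [Fintype I] [Fintype J] [DecidableEq I] [DecidableEq J]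
    (F : Matrix I J ℝ → ℝ) (α β γ : ℝ) : Prop :=
  ∀ x : Matrix I J ℝ,
    Metric.infDist x {y : Matrix I J ℝ | ∀ z, F y ≤ F z} ≤ α ∨
    β ≤ ‖mgrad F x‖ ∨
    ∃ v : Matrix I J ℝ, ‖v‖ = 1 ∧ hess F x v v ≤ -γ

open scoped InnerProductSpace

section Frobenius

variable {I J : Type*} [Fintype I] [Fintype J]

noncomputable def frobeniusIsometry :
    Matrix I J ℝ ≃ₗᵢ[ℝ] PiLp 2 (fun _ : I => EuclideanSpace ℝ J) where
  toFun X := WithLp.toLp 2 fun i => WithLp.toLp 2 (X i)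
  invFun x i j := x i j
  map_add' _ _ := rfl
  map_smul' _ _ := rfl
  left_inv _ := rfl
  right_inv _ := rfl
  norm_map' _ := rfl

lemma minner_eq_sum (X Y : Matrix I J ℝ) : minner X Y = ∑ i, ∑ j, X i j * Y i j := by
  simp only [minner, trace, diag, mul_apply, transpose_apply]
  exact Finset.sum_comm

lemma minner_eq_inner (X Y : Matrix I J ℝ) :
    minner X Y = ⟪frobeniusIsometry X, frobeniusIsometry Y⟫_ℝ := by
  simp only [minner_eq_sum, PiLp.inner_apply, RCLike.inner_apply, conj_trivial, mul_comm]
  rfl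

lemma minner_self (X : Matrix I J ℝ) : minner X X = ‖X‖ ^ 2 := by
  rw [minner_eq_inner, real_inner_self_eq_norm_sq, LinearIsometryEquiv.norm_map]

lemma abs_minner_le (X Y : Matrix I J ℝ) : |minner X Y| ≤ ‖X‖ * ‖Y‖ := by
  simpa [minner_eq_inner] using abs_real_inner_le_norm (frobeniusIsometry X) (frobeniusIsometry Y)

lemma frobenius_norm_sq_eq_sum (X : Matrix I J ℝ) : ‖X‖ ^ 2 = ∑ i, ∑ j, X i j ^ 2 := by
  rw [← minner_self, minner_eq_sum]
  simp [sq]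

lemma frobenius_norm_sq_fromRows {K : Type*} [Fintype K] (A : Matrix I J ℝ) (B : Matrix K J ℝ) :
    ‖fromRows A B‖ ^ 2 = ‖A‖ ^ 2 + ‖B‖ ^ 2 := by
  simp [frobenius_norm_sq_eq_sum, Fintype.sum_sum_type]

lemma frobenius_norm_sq_vecMulVec (x : I → ℝ) (y : J → ℝ) :
    ‖vecMulVec x y‖ ^ 2 = (x ⬝ᵥ x) * (y ⬝ᵥ y) := by
  simp only [frobenius_norm_sq_eq_sum, vecMulVec_apply, dotProduct, Finset.sum_mul_sum]
  exact Finset.sum_congr rfl fun i _ => Finset.sum_congr rfl fun j _ => by ring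

lemma HasDerivAt.matrix_norm_sq {γ : ℝ → Matrix I J ℝ} {γ' : Matrix I J ℝ} {t : ℝ}
    (hγ : HasDerivAt γ γ' t) : HasDerivAt (fun s => ‖γ s‖ ^ 2) (2 * minner (γ t) γ') t := by
  simpa [minner_eq_inner] using
    (frobeniusIsometry.toContinuousLinearEquiv.hasFDerivAt.comp_hasDerivAt t hγ).norm_sq

lemma Differentiable.matrix_norm_sq {E : Type*} [NormedAddCommGroup E] [NormedSpace ℝ E]
    {g : E → Matrix I J ℝ} (hg : Differentiable ℝ g) : Differentiable ℝ fun x => ‖g x‖ ^ 2 := by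
  simpa using (frobeniusIsometry.toContinuousLinearEquiv.differentiable.comp hg).norm_sq ℝ

variable [DecidableEq I] [DecidableEq J]

lemma minner_mgrad (F : Matrix I J ℝ → ℝ) (W Δ : Matrix I J ℝ) :
    minner (mgrad F W) Δ = fderiv ℝ F W Δ := by
  have hsingle (i : I) (j : J) : single i j (Δ i j) = Δ i j • single i j 1 := by
    simp [smul_single]
  conv_rhs => rw [matrix_eq_sum_single Δ]
  simp only [minner_eq_sum, mgrad, hsingle, map_sum, map_smul, smul_eq_mul, of_apply, mul_comm]

lemma abs_fderiv_apply_le (F : Matrix I J ℝ → ℝ) (W Δ : Matrix I J ℝ) :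
    |fderiv ℝ F W Δ| ≤ ‖mgrad F W‖ * ‖Δ‖ :=
  minner_mgrad F W Δ ▸ abs_minner_le _ _

end Frobenius

section Differentiability

variable {E : Type*} [NormedAddCommGroup E] [NormedSpace ℝ E]
variable {a b c : Type*} [Fintype a] [Fintype b] [Fintype c]

lemma isBoundedBilinearMap_matrix_mul :
    IsBoundedBilinearMap ℝ fun p : Matrix a b ℝ × Matrix b c ℝ => p.1 * p.2 where
  add_left := Matrix.add_mul
  smul_left := Matrix.smul_mul
  add_right := Matrix.mul_add
  smul_right c x y := Matrix.mul_smul x c y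
  bound := ⟨1, one_pos, fun x y => by simpa using frobenius_norm_mul x y⟩

lemma Differentiable.matrix_mul {A : E → Matrix a b ℝ} {B : E → Matrix b c ℝ}
    (hA : Differentiable ℝ A) (hB : Differentiable ℝ B) :
    Differentiable ℝ fun x => A x * B x :=
  (isBoundedBilinearMap_matrix_mul.differentiable.comp (hA.prodMk hB) :)

lemma Differentiable.matrix_transpose {A : E → Matrix a b ℝ} (hA : Differentiable ℝ A) :
    Differentiable ℝ fun x => (A x)ᵀ :=
  (transposeLinearEquiv a b ℝ ℝ).toLinearMap.toContinuousLinearMap.differentiable.comp hA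

lemma differentiable_toRows₁ : Differentiable ℝ (toRows₁ : Matrix (a ⊕ b) c ℝ → _) :=
  (⟨⟨toRows₁, fun _ _ => rfl⟩, fun _ _ => rfl⟩ :
    Matrix (a ⊕ b) c ℝ →ₗ[ℝ] Matrix a c ℝ).toContinuousLinearMap.differentiable

lemma differentiable_toRows₂ : Differentiable ℝ (toRows₂ : Matrix (a ⊕ b) c ℝ → _) :=
  (⟨⟨toRows₂, fun _ _ => rfl⟩, fun _ _ => rfl⟩ :
    Matrix (a ⊕ b) c ℝ →ₗ[ℝ] Matrix b c ℝ).toContinuousLinearMap.differentiable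

end Differentiability

lemma differentiable_rhoW {n m r : ℕ} {f : Matrix (Fin n) (Fin m) ℝ → ℝ}
    (hf : Differentiable ℝ f) (μ : ℝ) : Differentiable ℝ (rhoW (r := r) f μ) := by
  have h₁ := differentiable_toRows₁ (a := Fin n) (b := Fin m) (c := Fin r)
  have h₂ := differentiable_toRows₂ (a := Fin n) (b := Fin m) (c := Fin r)
  exact (hf.comp (h₁.matrix_mul h₂.matrix_transpose)).add
    ((h₁.matrix_transpose.matrix_mul h₁ |>.sub (h₂.matrix_transpose.matrix_mul h₂)).matrix_norm_sq
      |>.const_mul _)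

lemma Matrix.IsHermitian.trace_mul_self {𝕜 R : Type*} [RCLike 𝕜] [Fintype R] [DecidableEq R]
    {A : Matrix R R 𝕜} (hA : A.IsHermitian) :
    (A * A).trace = ∑ i, (hA.eigenvalues i : 𝕜) ^ 2 := by
  conv_lhs => rw [hA.spectral_theorem, ← map_mul, Unitary.conjStarAlgAut_apply,
    trace_mul_cycle, Unitary.coe_star_mul_self, Matrix.one_mul, diagonal_mul_diagonal,
    trace_diagonal]
  simp [sq]

lemma Matrix.IsHermitian.exists_eigenvector_norm_sq_le {R : Type*} [Fintype R] [DecidableEq R]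
    [Nonempty R] {E : Matrix R R ℝ} (hE : E.IsHermitian) :
    ∃ (v : R → ℝ) (l : ℝ), v ⬝ᵥ v = 1 ∧ E *ᵥ v = l • v ∧ ‖E‖ ^ 2 ≤ Fintype.card R * l ^ 2 := by
  obtain ⟨i, hi⟩ := Finite.exists_max fun i => hE.eigenvalues i ^ 2
  refine ⟨hE.eigenvectorBasis i, hE.eigenvalues i, ?_, hE.mulVec_eigenvectorBasis i, ?_⟩
  · have hunit : ⟪hE.eigenvectorBasis i, hE.eigenvectorBasis i⟫_ℝ = 1 := by
      rw [real_inner_self_eq_norm_sq, hE.eigenvectorBasis.orthonormal.1 i, one_pow]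
    rwa [EuclideanSpace.inner_eq_star_dotProduct, star_trivial, dotProduct_comm] at hunit
  · have hEt : Eᵀ = E := by simpa [conjTranspose_eq_transpose_of_trivial] using hE.eq
    calc ‖E‖ ^ 2 = ∑ j, hE.eigenvalues j ^ 2 := by
          rw [← minner_self, minner, hEt, hE.trace_mul_self]; simp
      _ ≤ ∑ _j : R, hE.eigenvalues i ^ 2 := Finset.sum_le_sum fun j _ => hi j
      _ = Fintype.card R * hE.eigenvalues i ^ 2 := by simp

section BalancingDirection

variable {N M R : Type*} [Fintype R]

lemma dotProduct_transpose_mul_self_mulVec [Fintype N] (U : Matrix N R ℝ) (v : R → ℝ) :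
    v ⬝ᵥ ((Uᵀ * U) *ᵥ v) = (U *ᵥ v) ⬝ᵥ (U *ᵥ v) := by
  rw [← mulVec_mulVec, dotProduct_mulVec, vecMul_transpose]

lemma mul_transpose_perturb (U : Matrix N R ℝ) (V : Matrix M R ℝ) {D : Matrix R R ℝ}
    (hD : Dᵀ = D) (t : ℝ) :
    (U + t • (U * D)) * (V - t • (V * D))ᵀ = U * Vᵀ - t ^ 2 • (U * (D * (D * Vᵀ))) := by
  simp only [transpose_sub, transpose_smul, transpose_mul, hD, Matrix.add_mul, Matrix.mul_sub,
    Matrix.smul_mul, Matrix.mul_smul, Matrix.mul_assoc, sq]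
  module

lemma gram_sub_gram_perturb [Fintype N] [Fintype M] (U : Matrix N R ℝ) (V : Matrix M R ℝ)
    {D : Matrix R R ℝ} (hD : Dᵀ = D) (t : ℝ) :
    (U + t • (U * D))ᵀ * (U + t • (U * D)) - (V - t • (V * D))ᵀ * (V - t • (V * D)) =
      (Uᵀ * U - Vᵀ * V) + t • (D * (Uᵀ * U + Vᵀ * V) + (Uᵀ * U + Vᵀ * V) * D) +
        t ^ 2 • (D * (Uᵀ * U - Vᵀ * V) * D) := by
  simp only [transpose_add, transpose_sub, transpose_smul, transpose_mul, hD, Matrix.add_mul,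
    Matrix.mul_add, Matrix.sub_mul, Matrix.mul_sub, Matrix.smul_mul, Matrix.mul_smul,
    Matrix.mul_assoc, sq]
  module

lemma minner_vecMulVec_mul_add {E S : Matrix R R ℝ} {v : R → ℝ} {l : ℝ} (hE : Eᵀ = E)
    (hEv : E *ᵥ v = l • v) :
    minner E (vecMulVec v v * S + S * vecMulVec v v) = 2 * l * (v ⬝ᵥ (S *ᵥ v)) := by
  have hvE : v ᵥ* E = l • v := by rw [← hE, vecMul_transpose, hEv]
  rw [minner, hE, Matrix.mul_add, trace_add, ← Matrix.mul_assoc, ← Matrix.mul_assoc,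
    mul_vecMulVec, mul_vecMulVec, vecMulVec_mul, trace_vecMulVec, trace_vecMulVec, hEv,
    ← mulVec_mulVec, dotProduct_comm (E *ᵥ _), dotProduct_mulVec v E, hvE,
    smul_dotProduct, smul_dotProduct, dotProduct_comm v (v ᵥ* S), ← dotProduct_mulVec,
    smul_eq_mul]
  ring

noncomputable def balancingDirection (U : Matrix N R ℝ) (V : Matrix M R ℝ) (v : R → ℝ) :
    Matrix (N ⊕ M) R ℝ :=
  fromRows (U * vecMulVec v v) (-(V * vecMulVec v v))

variable [Fintype N] [Fintype M]

lemma norm_sq_balancingDirection (U : Matrix N R ℝ) (V : Matrix M R ℝ) {v : R → ℝ}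
    (hv : v ⬝ᵥ v = 1) :
    ‖balancingDirection U V v‖ ^ 2 = (U *ᵥ v) ⬝ᵥ (U *ᵥ v) + (V *ᵥ v) ⬝ᵥ (V *ᵥ v) := by
  rw [balancingDirection, frobenius_norm_sq_fromRows, norm_neg, mul_vecMulVec, mul_vecMulVec,
    frobenius_norm_sq_vecMulVec, frobenius_norm_sq_vecMulVec, hv, mul_one, mul_one]

lemma abs_le_norm_sq_balancingDirection (U : Matrix N R ℝ) (V : Matrix M R ℝ) {v : R → ℝ}
    {l : ℝ} (hv : v ⬝ᵥ v = 1) (hEv : (Uᵀ * U - Vᵀ * V) *ᵥ v = l • v) :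
    |l| ≤ ‖balancingDirection U V v‖ ^ 2 := by
  have hl : l = (U *ᵥ v) ⬝ᵥ (U *ᵥ v) - (V *ᵥ v) ⬝ᵥ (V *ᵥ v) := by
    rw [← dotProduct_transpose_mul_self_mulVec, ← dotProduct_transpose_mul_self_mulVec,
      ← dotProduct_sub, ← sub_mulVec, hEv, dotProduct_smul, hv, smul_eq_mul, mul_one]
  have hU := dotProduct_self_star_nonneg (U *ᵥ v)
  have hV := dotProduct_self_star_nonneg (V *ᵥ v)
  rw [star_trivial] at hU hV
  rw [norm_sq_balancingDirection U V hv, hl, abs_le]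
  constructor <;> linarith

end BalancingDirection

lemma hasDerivAt_comp_sub_sq_smul {E : Type*} [NormedAddCommGroup E] [NormedSpace ℝ E]
    {f : E → ℝ} {A : E} (hf : DifferentiableAt ℝ f A) (K : E) :
    HasDerivAt (fun t : ℝ => f (A - t ^ 2 • K)) 0 0 := by
  have hγ : HasDerivAt (fun t : ℝ => A - t ^ 2 • K) 0 0 := by
    simpa using ((hasDerivAt_pow 2 (0 : ℝ)).smul_const K).const_sub A
  have hf₀ : DifferentiableAt ℝ f (A - (0 : ℝ) ^ 2 • K) := by simpa using hf
  exact (hf₀.hasFDerivAt.comp_hasDerivAt (0 : ℝ) hγ).congr_deriv (map_zero _)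

lemma hasDerivAt_norm_sq_add_smul_add_sq_smul {I J : Type*} [Fintype I] [Fintype J]
    (A B C : Matrix I J ℝ) :
    HasDerivAt (fun t : ℝ => ‖A + t • B + t ^ 2 • C‖ ^ 2) (2 * minner A B) 0 := by
  have hγ : HasDerivAt (fun t : ℝ => A + t • B + t ^ 2 • C) B 0 :=
    ((((hasDerivAt_id (0 : ℝ)).smul_const B).const_add A).add
      ((hasDerivAt_pow 2 (0 : ℝ)).smul_const C)).congr_deriv (by simp)
  simpa using hγ.matrix_norm_sq

lemma hasLineDerivAt_rhoW {n m r : ℕ} {f : Matrix (Fin n) (Fin m) ℝ → ℝ} (μ : ℝ)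
    {U : Matrix (Fin n) (Fin r) ℝ} {V : Matrix (Fin m) (Fin r) ℝ} {v : Fin r → ℝ} {l : ℝ}
    (hf : DifferentiableAt ℝ f (U * Vᵀ)) (hv : v ⬝ᵥ v = 1)
    (hEv : (Uᵀ * U - Vᵀ * V) *ᵥ v = l • v) :
    HasLineDerivAt ℝ (rhoW f μ) (μ * l * ‖balancingDirection U V v‖ ^ 2) (fromRows U V)
      (balancingDirection U V v) := by
  set D := vecMulVec v v
  have hD : Dᵀ = D := transpose_vecMulVec v v
  have hE : (Uᵀ * U - Vᵀ * V)ᵀ = Uᵀ * U - Vᵀ * V := by simp [transpose_sub]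
  have hcurve (t : ℝ) : rhoW f μ (fromRows U V + t • balancingDirection U V v) =
      f (U * Vᵀ - t ^ 2 • (U * (D * (D * Vᵀ)))) + μ / 4 * ‖(Uᵀ * U - Vᵀ * V) +
        t • (D * (Uᵀ * U + Vᵀ * V) + (Uᵀ * U + Vᵀ * V) * D) +
          t ^ 2 • (D * (Uᵀ * U - Vᵀ * V) * D)‖ ^ 2 := by
    have h₁ : (fromRows U V + t • balancingDirection U V v).toRows₁ = U + t • (U * D) := by
      ext; simp [balancingDirection, D]
    have h₂ : (fromRows U V + t • balancingDirection U V v).toRows₂ = V - t • (V * D) := by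
      ext; simp [balancingDirection, D, sub_eq_add_neg]
    rw [rhoW, h₁, h₂, mul_transpose_perturb U V hD, gram_sub_gram_perturb U V hD]
  have hs : v ⬝ᵥ ((Uᵀ * U + Vᵀ * V) *ᵥ v) = ‖balancingDirection U V v‖ ^ 2 := by
    rw [add_mulVec, dotProduct_add, dotProduct_transpose_mul_self_mulVec,
      dotProduct_transpose_mul_self_mulVec, norm_sq_balancingDirection U V hv]
  unfold HasLineDerivAt
  simp only [hcurve]
  refine ((hasDerivAt_comp_sub_sq_smul hf _).add
    ((hasDerivAt_norm_sq_add_smul_add_sq_smul _ _ _).const_mul (μ / 4))).congr_deriv ?_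
  rw [minner_vecMulVec_mul_add hE hEv, hs]
  ring

lemma div_le_abs_of_le_of_sq_le {ε e l r : ℝ} (hε : 0 ≤ ε) (hr : 1 ≤ r) (h : ε ≤ e)
    (he : e ^ 2 ≤ r * l ^ 2) : ε / r ≤ |l| := by
  rw [div_le_iff₀ (by positivity)]
  refine le_of_pow_le_pow_left₀ two_ne_zero (by positivity) ?_
  calc ε ^ 2 ≤ e ^ 2 := by gcongr
    _ ≤ r * l ^ 2 := he
    _ ≤ r ^ 2 * l ^ 2 := by gcongr; exact le_self_pow₀ hr two_ne_zero
    _ = (|l| * r) ^ 2 := by rw [mul_pow, sq_abs, mul_comm]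

lemma mul_rpow_three_halves_le {μ a l d g : ℝ} (hμ : 0 ≤ μ) (ha : 0 < a) (hal : a ≤ |l|)
    (hld : |l| ≤ d ^ 2) (hd : 0 ≤ d) (hg : |μ * l * d ^ 2| ≤ g * d) :
    μ * a ^ (3 / 2 : ℝ) ≤ g := by
  have hd₀ : 0 < d := hd.lt_of_ne (by rintro rfl; linarith [hal.trans hld])
  have hlg : μ * |l| * d ≤ g := by
    rw [abs_mul, abs_mul, abs_of_nonneg hμ, abs_of_nonneg (sq_nonneg d)] at hg
    exact le_of_mul_le_mul_right (by nlinarith) hd₀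
  have hsqrt : √a ≤ d := by
    simpa [Real.sqrt_sq hd] using Real.sqrt_le_sqrt (hal.trans hld)
  calc μ * a ^ (3 / 2 : ℝ) = μ * (a * √a) := by
        rw [show (3 / 2 : ℝ) = 1 + 1 / 2 by norm_num, Real.rpow_add ha, Real.rpow_one,
          Real.sqrt_eq_rpow]
    _ ≤ μ * (|l| * d) := by gcongr
    _ ≤ g := by linarith

/-- If the balancing residual `‖UᵀU − VᵀV‖_F` is at least `ε`, then the gradient of the
regularized objective `ρ` is at least `μ(ε/r)^{3/2}` in Frobenius norm. -/
theorem statement18 (n m r : ℕ) (μ ε : ℝ)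
    (f : Matrix (Fin n) (Fin m) ℝ → ℝ) (hf : ContDiff ℝ 2 f)
    (hμ : 0 < μ) (hε : 0 < ε)
    (W : Matrix (Fin n ⊕ Fin m) (Fin r) ℝ)
    (h : ε ≤ ‖W.toRows₁ᵀ * W.toRows₁ - W.toRows₂ᵀ * W.toRows₂‖) :
    μ * (ε / r) ^ ((3 : ℝ) / 2) ≤ ‖mgrad (rhoW f μ) W‖ := by
  obtain ⟨U, V, rfl⟩ : ∃ U V, W = fromRows U V := ⟨_, _, (fromRows_toRows W).symm⟩
  rw [toRows₁_fromRows, toRows₂_fromRows] at h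
  have hr : 0 < r := Nat.pos_of_ne_zero (by rintro rfl; simp at h; linarith)
  have : Nonempty (Fin r) := Fin.pos_iff_nonempty.mp hr
  have hE : (Uᵀ * U - Vᵀ * V).IsHermitian := by
    simpa [conjTranspose_eq_transpose_of_trivial] using
      (isHermitian_conjTranspose_mul_self U).sub (isHermitian_conjTranspose_mul_self V)
  obtain ⟨v, l, hv, hEv, hnorm⟩ := hE.exists_eigenvector_norm_sq_le
  rw [Fintype.card_fin] at hnorm
  have hεl : ε / r ≤ |l| := div_le_abs_of_le_of_sq_le hε.le (by exact_mod_cast hr) h hnorm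
  have hdiff := hf.differentiable two_ne_zero
  have hfderiv : fderiv ℝ (rhoW f μ) (fromRows U V) (balancingDirection U V v) =
      μ * l * ‖balancingDirection U V v‖ ^ 2 :=
    ((differentiable_rhoW hdiff μ _).hasFDerivAt.hasLineDerivAt _).unique
      (hasLineDerivAt_rhoW μ (hdiff _) hv hEv)
  exact mul_rpow_three_halves_le hμ.le (by positivity) hεl
    (abs_le_norm_sq_balancingDirection U V hv hEv) (norm_nonneg _)
    (hfderiv ▸ abs_fderiv_apply_le _ _ _)
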